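/- arXiv:1502.02404 — 3 statements merged into one kernel-verified Lean document; each statement's English description precedes it below -/
import Mathlib

section
/- Let k ≥ 2 and let F be a finite rooted forest whose set V of nodes satisfies |V| < k. Let M : V → Finset ℕ assign to each node a finite set of positive natural numbers such that the sets M(v) (v ∈ V) are pairwise disjoint, |M(r)| = 1 for every root r, and |M(v)| = ∑_{j ∈ M(p)} k^j for every non-root v with parent p. Define M_0 = ⋃_{v∈V} M(v) and, recursively, M_{i+1} = { j > 0 : the j-th base-k digit of |M_i| is nonzero }. Then for every i ∈ ℕ, M_i = ⋃ { M(v) : v ∈ V, height(v) ≥ i }, where height(v) is the height of the subtree rooted at v (leaves have height 0). -/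
/-!
Write `S_i` for the set of nodes of height `≥ i`. Inductively `M_i = ⋃_{v ∈ S_i} M v`, a disjoint
union, so `|M_i| = ∑_{v ∈ S_i} ∑_{j ∈ M (parent v)} k ^ j`, a root contributing `k ^ 0`.
Collecting equal exponents, the coefficient of `k ^ j` counts the nodes of `S_i` whose parent's
set contains `j`; it is at most `|V| < k`, so it is exactly the `j`-th base-`k` digit of `|M_i|`.
Hence for `j > 0` that digit is nonzero iff `j ∈ M p` for the parent `p` of some node of
height `≥ i`, that is, for some node `p` of height `≥ i + 1`.
-/

open Finset

namespace Nat

theorem sum_range_mul_pow_lt {k m : ℕ} {c : ℕ → ℕ} (hc : ∀ j < m, c j < k) :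
    ∑ j ∈ range m, c j * k ^ j < k ^ m := by
  induction m with
  | zero => simp
  | succ m ih =>
    have hm : c m + 1 ≤ k := hc m m.lt_succ_self
    calc ∑ j ∈ range (m + 1), c j * k ^ j
        = ∑ j ∈ range m, c j * k ^ j + c m * k ^ m := sum_range_succ _ _
      _ < k ^ m + c m * k ^ m := by gcongr; exact ih fun j hj => hc j (by omega)
      _ = (c m + 1) * k ^ m := by ring
      _ ≤ k ^ (m + 1) := by rw [pow_succ']; gcongr

theorem sum_range_mul_pow_div_pow_mod {k n : ℕ} {c : ℕ → ℕ} (hc : ∀ j < n, c j < k) (m : ℕ) :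
    (∑ j ∈ range n, c j * k ^ j) / k ^ m % k = if m < n then c m else 0 := by
  split_ifs with hm
  · obtain ⟨r, rfl⟩ := Nat.exists_eq_add_of_lt hm
    have hk : 0 < k := (zero_le _).trans_lt (hc m hm)
    have hsplit : ∑ j ∈ range (m + r + 1), c j * k ^ j = ∑ j ∈ range m, c j * k ^ j
        + k ^ m * (c m + k * ∑ j ∈ range r, c (m + 1 + j) * k ^ j) := by
      rw [add_right_comm, sum_range_add, sum_range_succ, add_assoc, mul_add, mul_sum, mul_sum,
        mul_comm (k ^ m)]
      congr 2
      exact sum_congr rfl fun j _ => by ring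
    rw [hsplit, add_mul_div_left _ _ (pow_pos hk m),
      div_eq_of_lt (sum_range_mul_pow_lt fun j hj => hc j (by omega)), zero_add,
      add_mul_mod_self_left, mod_eq_of_lt (hc m hm)]
  · rcases n.eq_zero_or_pos with rfl | hn
    · simp
    have hk : 0 < k := (zero_le _).trans_lt (hc 0 hn)
    rw [div_eq_of_lt ((sum_range_mul_pow_lt hc).trans_le (pow_le_pow_right₀ hk (by omega))),
      zero_mod]

end Nat

namespace Finset

theorem sum_sum_eq_sum_card_filter_nsmul {ι α β : Type*} [AddCommMonoid β] [DecidableEq α]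
    {s : Finset ι} {t : Finset α} {g : ι → Finset α} (h : ∀ i ∈ s, g i ⊆ t) (f : α → β) :
    ∑ i ∈ s, ∑ a ∈ g i, f a = ∑ a ∈ t, #{i ∈ s | a ∈ g i} • f a := by
  rw [sum_comm' (t' := t) (s' := fun a => {i ∈ s | a ∈ g i})]
  · simp only [sum_const]
  · intro i a
    simp only [mem_filter]
    exact ⟨fun ⟨hi, ha⟩ => ⟨⟨hi, ha⟩, h i hi ha⟩, fun ⟨hia, _⟩ => hia⟩

end Finset

section Forest

variable {V : Type*} {parent : V → Option V} {M : V → Finset ℕ}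

variable (parent M) in
/-- A root is treated as the child of a virtual node with exponent set `{0}`, matching
`#(M r) = 1 = k ^ 0`. -/
def parentExponents (v : V) : Finset ℕ := (parent v).elim {0} M

theorem card_eq_sum_parentExponents {k : ℕ} (hroot : ∀ r, parent r = none → (M r).card = 1)
    (hchild : ∀ v p, parent v = some p → (M v).card = ∑ j ∈ M p, k ^ j) (v : V) :
    (M v).card = ∑ j ∈ parentExponents parent M v, k ^ j := by
  cases hp : parent v with
  | none => simp [parentExponents, hp, hroot v hp]
  | some p => simp [parentExponents, hp, hchild v p hp]

theorem mem_parentExponents_iff {j : ℕ} (hj : 0 < j) (v : V) :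
    j ∈ parentExponents parent M v ↔ ∃ p, parent v = some p ∧ j ∈ M p := by
  cases hp : parent v with
  | none => simp [parentExponents, hp, hj.ne']
  | some p => simp [parentExponents, hp]

theorem card_biUnion_div_pow_mod_ne_zero_iff [Fintype V] {k : ℕ} (hcard : Fintype.card V < k)
    (hdisj : ∀ v w, v ≠ w → Disjoint (M v) (M w))
    (hroot : ∀ r, parent r = none → (M r).card = 1)
    (hchild : ∀ v p, parent v = some p → (M v).card = ∑ j ∈ M p, k ^ j) (S : Finset V) (j : ℕ) :
    (S.biUnion M).card / k ^ j % k ≠ 0 ↔ ∃ v ∈ S, j ∈ parentExponents parent M v := by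
  set c : ℕ → ℕ := fun j => #{v ∈ S | j ∈ parentExponents parent M v}
  obtain ⟨n, hn⟩ := exists_nat_subset_range (univ.biUnion (parentExponents parent M))
  have hsub : ∀ v ∈ S, parentExponents parent M v ⊆ range n :=
    fun v _ => (subset_biUnion_of_mem _ (mem_univ v)).trans hn
  have hc : ∀ j, c j < k := fun j => (card_filter_le _ _).trans_lt ((card_le_univ S).trans_lt hcard)
  have hsum : (S.biUnion M).card = ∑ j ∈ range n, c j * k ^ j := by
    rw [card_biUnion fun v _ w _ => hdisj v w,
      sum_congr rfl fun v _ => card_eq_sum_parentExponents hroot hchild v,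
      sum_sum_eq_sum_card_filter_nsmul hsub]
    rfl
  have hc_ne_zero : c j ≠ 0 ↔ ∃ v ∈ S, j ∈ parentExponents parent M v := by
    rw [← pos_iff_ne_zero, card_pos, filter_nonempty_iff]
  rw [hsum, Nat.sum_range_mul_pow_div_pow_mod (fun j _ => hc j), ite_ne_right_iff, hc_ne_zero]
  exact and_iff_right_of_imp fun ⟨v, hv, hjv⟩ => mem_range.1 (hsub v hv hjv)

theorem succ_le_iff_exists_child [Fintype V] [DecidableEq V] {ht : V → ℕ}
    (hht : ∀ v, ht v =
      (Finset.univ.filter (fun w => parent w = some v)).sup (fun w => ht w + 1))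
    (i : ℕ) (p : V) : i + 1 ≤ ht p ↔ ∃ v, parent v = some p ∧ i ≤ ht v := by
  rw [hht p, Finset.le_sup_iff i.succ_pos]
  simp

end Forest

theorem forest_Mi_general (k : ℕ) (V : Type) [Fintype V] [DecidableEq V]
    (parent : V → Option V) (ht : V → ℕ)
    (hht : ∀ v, ht v =
      (Finset.univ.filter (fun w => parent w = some v)).sup (fun w => ht w + 1))
    (hcard : Fintype.card V < k)
    (M : V → Finset ℕ)
    (hpos : ∀ v, ∀ j ∈ M v, 0 < j)
    (hdisj : ∀ v w, v ≠ w → Disjoint (M v) (M w))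
    (hroot : ∀ r, parent r = none → (M r).card = 1)
    (hchild : ∀ v p, parent v = some p → (M v).card = ∑ j ∈ M p, k ^ j)
    (Mi : ℕ → Finset ℕ)
    (hM0 : Mi 0 = Finset.univ.biUnion M)
    (hMi : ∀ i j, j ∈ Mi (i + 1) ↔ 0 < j ∧ (Mi i).card / k ^ j % k ≠ 0) :
    ∀ i, Mi i = (Finset.univ.filter (fun v => i ≤ ht v)).biUnion M := by
  intro i
  induction i with
  | zero => simp [hM0]
  | succ i ih =>
    ext j
    rw [hMi, ih, card_biUnion_div_pow_mod_ne_zero_iff hcard hdisj hroot hchild]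
    simp only [mem_biUnion, mem_filter, mem_univ, true_and]
    constructor
    · rintro ⟨hj, v, hv, hjv⟩
      obtain ⟨p, hvp, hjp⟩ := (mem_parentExponents_iff hj v).1 hjv
      exact ⟨p, (succ_le_iff_exists_child hht i p).2 ⟨v, hvp, hv⟩, hjp⟩
    · rintro ⟨p, hp, hjp⟩
      obtain ⟨v, hvp, hv⟩ := (succ_le_iff_exists_child hht i p).1 hp
      have hj := hpos p j hjp
      exact ⟨hj, v, hv, (mem_parentExponents_iff hj v).2 ⟨p, hvp, hjp⟩⟩

/-- Forest lemma (abstract core of the paper's Lemma on `M_i(e)`).  `V` is the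
node set of a finite rooted forest given by a `parent` function, `ht v` is the
height of the subtree rooted at `v` (leaves have height `0`, so
`ht v = sup over children w of (ht w + 1)`).  If `|V| < k` with `k ≥ 2`, and
`M : V → Finset ℕ` assigns pairwise disjoint finite sets of positive naturals
with `|M r| = 1` for roots and `|M v| = ∑ j ∈ M p, k ^ j` when `p` is the parent
of `v`, then the recursion `M₀ = ⋃ v, M v`,
`M_{i+1} = { j > 0 : j-th base-k digit of |M_i| ≠ 0 }` satisfies
`M_i = ⋃ { M v : ht v ≥ i }` for all `i`. -/
theorem forest_Mi (k : ℕ) (hk : 2 ≤ k) (V : Type) [Fintype V] [DecidableEq V]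
    (parent : V → Option V) (ht : V → ℕ)
    (hht : ∀ v, ht v =
      (Finset.univ.filter (fun w => parent w = some v)).sup (fun w => ht w + 1))
    (hcard : Fintype.card V < k)
    (M : V → Finset ℕ)
    (hpos : ∀ v, ∀ j ∈ M v, 0 < j)
    (hdisj : ∀ v w, v ≠ w → Disjoint (M v) (M w))
    (hroot : ∀ r, parent r = none → (M r).card = 1)
    (hchild : ∀ v p, parent v = some p → (M v).card = ∑ j ∈ M p, k ^ j)
    (Mi : ℕ → Finset ℕ)
    (hM0 : Mi 0 = Finset.univ.biUnion M)
    (hMi : ∀ i j, j ∈ Mi (i + 1) ↔ 0 < j ∧ (Mi i).card / k ^ j % k ≠ 0) :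
    ∀ i, Mi i = (Finset.univ.filter (fun v => i ≤ ht v)).biUnion M :=
  forest_Mi_general k V parent ht hht hcard M hpos hdisj hroot hchild Mi hM0 hMi
end

section
/- Under the hypotheses of the forest lemma (finite rooted forest F with node set V, |V| < k, k ≥ 2, pairwise disjoint finite sets M(v) ⊆ ℕ_{>0} with |M(r)| = 1 for roots and |M(v)| = ∑_{j∈M(p)} k^j when p is the parent of v; M_0 = ⋃_v M(v) and M_{i+1} = positive positions of nonzero base-k digits of |M_i|), define N_i = M_i \ M_{i+1}. Then N_i = ⋃ { M(v) : v ∈ V, height(v) = i }; in particular, for every j ∈ N_i there is a unique node v of height exactly i with j ∈ M(v). -/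
/-!
By induction on `i`, `Mi i` is the union of the `M v` over the nodes of height at least `i`.
The cardinality of such a union is a sum of powers of `k`: one `k ^ 0` per root, and one `k ^ j`
per `j ∈ M p` for every other node with parent `p`. Each power occurs fewer than `|V| < k` times,
so this is the base-`k` expansion, and for `j > 0` its digit at `j` counts the children of height
`≥ i` of the node `p` with `j ∈ M p`. That digit is nonzero iff `p` has height `≥ i + 1`, which
gives the induction step; disjointness of the `M v` then identifies `Mi i \ Mi (i + 1)`.
-/

open Finset

theorem Nat.sum_range_mul_pow_div_pow_mod_s6 {k : ℕ} {c : ℕ → ℕ} (hc : ∀ i, c i < k) (m j : ℕ) :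
    (∑ i ∈ range m, c i * k ^ i) / k ^ j % k = if j < m then c j else 0 := by
  induction m generalizing c j with
  | zero => simp
  | succ m ih =>
    have hk : 0 < k := (Nat.zero_le _).trans_lt (hc 0)
    have hsplit : ∑ i ∈ range (m + 1), c i * k ^ i
        = k * ∑ i ∈ range m, c (i + 1) * k ^ i + c 0 := by
      rw [sum_range_succ', mul_sum, pow_zero, mul_one]
      exact congrArg (· + c 0) (sum_congr rfl fun i _ => by ring)
    rw [hsplit]
    cases j with
    | zero => simp [Nat.mod_eq_of_lt (hc 0)]
    | succ j =>
      rw [pow_succ', ← Nat.div_div_eq_div_mul, Nat.mul_add_div hk, Nat.div_eq_of_lt (hc 0),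
        add_zero, ih (fun i => hc (i + 1))]
      simp

theorem Finset.sum_sum_pow_div_pow_mod {α : Type*} (S : Finset α) (E : α → Finset ℕ) {k : ℕ}
    (hS : #S < k) (j : ℕ) :
    (∑ v ∈ S, ∑ i ∈ E v, k ^ i) / k ^ j % k = #{v ∈ S | j ∈ E v} := by
  obtain ⟨m, hm⟩ := exists_nat_subset_range (S.biUnion E)
  have hE : ∀ v ∈ S, E v ⊆ range m := fun v hv => (subset_biUnion_of_mem E hv).trans hm
  have hsum : ∑ v ∈ S, ∑ i ∈ E v, k ^ i = ∑ i ∈ range m, #{v ∈ S | i ∈ E v} * k ^ i := by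
    calc ∑ v ∈ S, ∑ i ∈ E v, k ^ i
        = ∑ v ∈ S, ∑ i ∈ range m, if i ∈ E v then k ^ i else 0 :=
          sum_congr rfl fun v hv => by rw [sum_ite_mem, inter_eq_right.2 (hE v hv)]
      _ = ∑ i ∈ range m, #{v ∈ S | i ∈ E v} * k ^ i := by
          rw [sum_comm]
          simp [sum_ite]
  rw [hsum, Nat.sum_range_mul_pow_div_pow_mod_s6 (fun i => (card_filter_le _ _).trans_lt hS)]
  split_ifs with hj
  · rfl
  · refine (card_eq_zero.2 (filter_eq_empty_iff.2 fun v hv hjv => hj ?_)).symm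
    exact mem_range.1 (hE v hv hjv)

section Forest

open Function

variable {V : Type*} {parent : V → Option V} {ht : V → ℕ} {M : V → Finset ℕ} {k : ℕ}

variable (parent M) in
def cardExponents (v : V) : Finset ℕ := (parent v).elim {0} M

theorem mem_cardExponents_of_pos {v : V} {j : ℕ} (hj : 0 < j) :
    j ∈ cardExponents parent M v ↔ ∃ p, parent v = some p ∧ j ∈ M p := by
  cases h : parent v <;> simp [cardExponents, h]
  omega

theorem card_biUnion_eq_sum_pow_cardExponents (hdisj : Pairwise (Disjoint on M))
    (hroot : ∀ r, parent r = none → #(M r) = 1)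
    (hchild : ∀ v p, parent v = some p → #(M v) = ∑ j ∈ M p, k ^ j) (S : Finset V) :
    #(S.biUnion M) = ∑ v ∈ S, ∑ j ∈ cardExponents parent M v, k ^ j := by
  rw [card_biUnion fun v _ w _ hvw => hdisj hvw]
  refine sum_congr rfl fun v _ => ?_
  cases h : parent v <;> simp [cardExponents, h, hroot, hchild]

variable [Fintype V]

theorem biUnion_height_ge_sdiff (hdisj : Pairwise (Disjoint on M)) (i : ℕ) :
    ({v | i ≤ ht v} : Finset V).biUnion M \ ({v | i + 1 ≤ ht v} : Finset V).biUnion M =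
      ({v | ht v = i} : Finset V).biUnion M := by
  ext j
  simp only [mem_sdiff, mem_biUnion, mem_filter, mem_univ, true_and, not_exists, not_and]
  constructor
  · rintro ⟨⟨v, hv, hjv⟩, hnot⟩
    exact ⟨v, by_contra fun hne => hnot v (by omega) hjv, hjv⟩
  · rintro ⟨v, rfl, hjv⟩
    refine ⟨⟨v, le_rfl, hjv⟩, fun w hw hjw => ?_⟩
    exact disjoint_left.1 (hdisj fun hwv : w = v => by subst hwv; omega) hjw hjv

variable [DecidableEq V]

theorem exists_child_le_height_iff
    (hht : ∀ v, ht v = ({w | parent w = some v} : Finset V).sup (fun w => ht w + 1))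
    (p : V) (i : ℕ) : (∃ w, parent w = some p ∧ i ≤ ht w) ↔ i + 1 ≤ ht p := by
  rw [hht p, Finset.le_sup_iff (Nat.succ_pos i)]
  simp

theorem digit_card_biUnion_height_ge_ne_zero_iff
    (hht : ∀ v, ht v = ({w | parent w = some v} : Finset V).sup (fun w => ht w + 1))
    (hcard : Fintype.card V < k) (hpos : ∀ v, ∀ j ∈ M v, 0 < j)
    (hdisj : Pairwise (Disjoint on M)) (hroot : ∀ r, parent r = none → #(M r) = 1)
    (hchild : ∀ v p, parent v = some p → #(M v) = ∑ j ∈ M p, k ^ j) (i j : ℕ) :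
    (0 < j ∧ #(({v | i ≤ ht v} : Finset V).biUnion M) / k ^ j % k ≠ 0) ↔
      ∃ v, i + 1 ≤ ht v ∧ j ∈ M v := by
  rw [card_biUnion_eq_sum_pow_cardExponents hdisj hroot hchild,
    sum_sum_pow_div_pow_mod _ _ ((card_filter_le _ _).trans_lt hcard), Ne, card_eq_zero,
    ← Ne, ← nonempty_iff_ne_empty, filter_nonempty_iff]
  constructor
  · rintro ⟨hj, v, hv, hjv⟩
    obtain ⟨p, hvp, hjp⟩ := (mem_cardExponents_of_pos hj).1 hjv
    exact ⟨p, (exists_child_le_height_iff hht p i).1 ⟨v, hvp, (mem_filter.1 hv).2⟩, hjp⟩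
  · rintro ⟨p, hp, hjp⟩
    have hj := hpos p j hjp
    obtain ⟨w, hwp, hw⟩ := (exists_child_le_height_iff hht p i).2 hp
    exact ⟨hj, w, mem_filter.2 ⟨mem_univ w, hw⟩, (mem_cardExponents_of_pos hj).2 ⟨p, hwp, hjp⟩⟩

theorem eq_biUnion_height_ge
    (hht : ∀ v, ht v = ({w | parent w = some v} : Finset V).sup (fun w => ht w + 1))
    (hcard : Fintype.card V < k) (hpos : ∀ v, ∀ j ∈ M v, 0 < j)
    (hdisj : Pairwise (Disjoint on M)) (hroot : ∀ r, parent r = none → #(M r) = 1)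
    (hchild : ∀ v p, parent v = some p → #(M v) = ∑ j ∈ M p, k ^ j) {Mi : ℕ → Finset ℕ}
    (hM0 : Mi 0 = univ.biUnion M)
    (hMi : ∀ i j, j ∈ Mi (i + 1) ↔ 0 < j ∧ #(Mi i) / k ^ j % k ≠ 0) (i : ℕ) :
    Mi i = ({v | i ≤ ht v} : Finset V).biUnion M := by
  induction i with
  | zero => simp [hM0]
  | succ i ih =>
    ext j
    rw [hMi, ih, digit_card_biUnion_height_ge_ne_zero_iff hht hcard hpos hdisj hroot hchild]
    simp

end Forest

theorem forest_Ni_general (k : ℕ) (V : Type) [Fintype V] [DecidableEq V]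
    (parent : V → Option V) (ht : V → ℕ)
    (hht : ∀ v, ht v =
      (Finset.univ.filter (fun w => parent w = some v)).sup (fun w => ht w + 1))
    (hcard : Fintype.card V < k)
    (M : V → Finset ℕ)
    (hpos : ∀ v, ∀ j ∈ M v, 0 < j)
    (hdisj : ∀ v w, v ≠ w → Disjoint (M v) (M w))
    (hroot : ∀ r, parent r = none → (M r).card = 1)
    (hchild : ∀ v p, parent v = some p → (M v).card = ∑ j ∈ M p, k ^ j)
    (Mi : ℕ → Finset ℕ)
    (hM0 : Mi 0 = Finset.univ.biUnion M)
    (hMi : ∀ i j, j ∈ Mi (i + 1) ↔ 0 < j ∧ (Mi i).card / k ^ j % k ≠ 0) :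
    ∀ i, Mi i \ Mi (i + 1) = (Finset.univ.filter (fun v => ht v = i)).biUnion M ∧
      ∀ j ∈ Mi i \ Mi (i + 1), ∃! v : V, ht v = i ∧ j ∈ M v := by
  intro i
  have hlevel : Mi i \ Mi (i + 1) = ({v | ht v = i} : Finset V).biUnion M := by
    simp only [eq_biUnion_height_ge hht hcard hpos hdisj hroot hchild hM0 hMi,
      biUnion_height_ge_sdiff hdisj]
  refine ⟨hlevel, fun j hj => ?_⟩
  obtain ⟨v, hv, hjv⟩ := mem_biUnion.1 (hlevel ▸ hj)
  refine ⟨v, ⟨(mem_filter.1 hv).2, hjv⟩, fun w hw => ?_⟩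
  by_contra hwv
  exact disjoint_left.1 (hdisj w v hwv) hw.2 hjv

/-- Under the hypotheses of the forest lemma, `N_i = M_i \ M_{i+1}` is exactly
the union of the sets `M v` over nodes `v` of height exactly `i`; in particular
every `j ∈ N_i` lies in `M v` for a unique node `v` of height exactly `i`. -/
theorem forest_Ni (k : ℕ) (hk : 2 ≤ k) (V : Type) [Fintype V] [DecidableEq V]
    (parent : V → Option V) (ht : V → ℕ)
    (hht : ∀ v, ht v =
      (Finset.univ.filter (fun w => parent w = some v)).sup (fun w => ht w + 1))
    (hcard : Fintype.card V < k)
    (M : V → Finset ℕ)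
    (hpos : ∀ v, ∀ j ∈ M v, 0 < j)
    (hdisj : ∀ v w, v ≠ w → Disjoint (M v) (M w))
    (hroot : ∀ r, parent r = none → (M r).card = 1)
    (hchild : ∀ v p, parent v = some p → (M v).card = ∑ j ∈ M p, k ^ j)
    (Mi : ℕ → Finset ℕ)
    (hM0 : Mi 0 = Finset.univ.biUnion M)
    (hMi : ∀ i j, j ∈ Mi (i + 1) ↔ 0 < j ∧ (Mi i).card / k ^ j % k ≠ 0) :
    ∀ i, Mi i \ Mi (i + 1) = (Finset.univ.filter (fun v => ht v = i)).biUnion M ∧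
      ∀ j ∈ Mi i \ Mi (i + 1), ∃! v : V, ht v = i ∧ j ∈ M v :=
  forest_Ni_general k V parent ht hht hcard M hpos hdisj hroot hchild Mi hM0 hMi
end

section
/- Let A be a set of atoms, P a finite set, and D ⊆ (D_A)^P an arbitrary set of P-indexed families of relational points. Call x ∈ D D-atomic if for all substitutions σ : A → D_A and all y ∈ D with σ·y = x (the action applied pointwise), every atom occurring in y is mapped by σ into {+,−}×A. Then for every y ∈ D there exist a D-atomic x ∈ D and a substitution σ : A → D_A with σ·x = y. -/
/-- Points of the untyped relational model `D_A` over a set `A` of atoms: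
base points `(δ, a)` with `a ∈ A`, base points `(δ, *)`, pair points and
finite-multiset points (represented as lists `[α₁,…,α_m]`).
`true` is `+`, `false` is `−`. -/
inductive DA (A : Type) : Type where
  | atom : Bool → A → DA A
  | star : Bool → DA A
  | pair : Bool → DA A → DA A → DA A
  | mset : Bool → List (DA A) → DA A

/-- Duality `α ↦ α^⊥`: flip the polarity at every level. -/
def DA.dual {A : Type} : DA A → DA A
  | .atom b a => .atom (!b) a
  | .star b => .star (!b)
  | .pair b x y => .pair (!b) x.dual y.dual
  | .mset b l => .mset (!b) (l.attach.map fun x => DA.dual x.1)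
decreasing_by
  all_goals first
    | decreasing_trivial
    | (have := List.sizeOf_lt_of_mem x.2; simp_wf; omega)

/-- The action `σ · α` of a substitution `σ : A → D_A` on a point `α ∈ D_A`:
positive atom occurrences `(+, γ)` are replaced by `σ γ`, negative ones `(−, γ)`
by `(σ γ)^⊥`, recursively through pairs and multisets. -/
def DA.subst {A : Type} (σ : A → DA A) : DA A → DA A
  | .atom true a => σ a
  | .atom false a => (σ a).dual
  | .star b => .star b
  | .pair b x y => .pair b (x.subst σ) (y.subst σ)
  | .mset b l => .mset b (l.attach.map fun x => DA.subst σ x.1)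
decreasing_by
  all_goals first
    | decreasing_trivial
    | (have := List.sizeOf_lt_of_mem x.2; simp_wf; omega)

/-- `DA.Occurs γ α`: the atom `γ` occurs in `α`, i.e. `(+, γ)` or `(−, γ)`
appears as a subterm of `α`. -/
inductive DA.Occurs {A : Type} (γ : A) : DA A → Prop where
  | atom (b : Bool) : DA.Occurs γ (.atom b γ)
  | pairL {b : Bool} {x y : DA A} : DA.Occurs γ x → DA.Occurs γ (.pair b x y)
  | pairR {b : Bool} {x y : DA A} : DA.Occurs γ y → DA.Occurs γ (.pair b x y)
  | mset {b : Bool} {l : List (DA A)} {x : DA A} :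
      x ∈ l → DA.Occurs γ x → DA.Occurs γ (.mset b l)

/-- `x ∈ D` is `D`-atomic if whenever `x` is the pointwise substitution
instance `σ · z` of some `z ∈ D`, every atom occurring in `z` is mapped by `σ`
to a point of the form `(δ, a)` with `a ∈ A`. -/
def DA.Atomic {A P : Type} (D : Set (P → DA A)) (x : P → DA A) : Prop :=
  ∀ (σ : A → DA A) (z : P → DA A), z ∈ D → (fun p => DA.subst σ (z p)) = x →
    ∀ γ : A, (∃ p, DA.Occurs γ (z p)) → ∃ (b : Bool) (a : A), σ γ = DA.atom b a


/-! Count the non-atomic nodes of a point. A substitution never decreases this count, and it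
strictly increases it as soon as an atom occurring in the point is sent to a non-atomic point.
So if `y` is not atomic, it is a substitution instance of some `z ∈ D` with a smaller total
count; iterating, this descent must stop at an atomic `x`, and composing the substitutions along
the way (`σ · (τ · x) = (σ ⋆ τ) · x`) exhibits `y` as an instance of `x`. -/

namespace DA

variable {A : Type}

theorem induction_mem {motive : DA A → Prop} (atom : ∀ b a, motive (.atom b a))
    (star : ∀ b, motive (.star b))
    (pair : ∀ b x y, motive x → motive y → motive (.pair b x y))
    (mset : ∀ b l, (∀ x ∈ l, motive x) → motive (.mset b l)) : ∀ x, motive x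
  | .atom b a => atom b a
  | .star b => star b
  | .pair b x y =>
    pair b x y (induction_mem atom star pair mset x) (induction_mem atom star pair mset y)
  | .mset b l => mset b l fun x _ => induction_mem atom star pair mset x

@[simp]
theorem dual_mset (b : Bool) (l : List (DA A)) :
    dual (.mset b l) = .mset (!b) (l.map dual) := by
  simp [dual]

@[simp]
theorem subst_mset (σ : A → DA A) (b : Bool) (l : List (DA A)) :
    subst σ (.mset b l) = .mset b (l.map (subst σ)) := by
  simp [subst]

@[simp]
theorem dual_dual (x : DA A) : x.dual.dual = x := by
  induction x using induction_mem with
  | mset b l ih => simp [Function.comp_def, List.map_congr_left ih]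
  | _ => simp_all [dual]

@[simp]
theorem subst_dual (σ : A → DA A) (x : DA A) : subst σ x.dual = (subst σ x).dual := by
  induction x using induction_mem with
  | atom b a => cases b <;> simp [dual, subst]
  | mset b l ih => simpa using List.map_congr_left ih
  | _ => simp_all [dual, subst]

theorem subst_atom_true (x : DA A) : subst (atom true) x = x := by
  induction x using induction_mem with
  | atom b a => cases b <;> simp [dual, subst]
  | mset b l ih => simpa using List.map_congr_left ih
  | _ => simp_all [subst]

theorem subst_subst (σ τ : A → DA A) (x : DA A) :
    subst σ (subst τ x) = subst (fun a => subst σ (τ a)) x := by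
  induction x using induction_mem with
  | atom b a => cases b <;> simp [subst]
  | mset b l ih => simpa using List.map_congr_left ih
  | _ => simp_all [subst]

def nonAtomSize : DA A → ℕ
  | .atom _ _ => 0
  | .star _ => 1
  | .pair _ x y => 1 + x.nonAtomSize + y.nonAtomSize
  | .mset _ l => 1 + (l.map nonAtomSize).sum

theorem nonAtomSize_pos {x : DA A} (hx : ∀ b a, x ≠ .atom b a) : 0 < x.nonAtomSize := by
  cases x <;> simp_all [nonAtomSize]

@[simp]
theorem nonAtomSize_dual (x : DA A) : x.dual.nonAtomSize = x.nonAtomSize := by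
  induction x using induction_mem with
  | mset b l ih => simp [nonAtomSize, Function.comp_def, List.map_congr_left ih]
  | _ => simp_all [dual, nonAtomSize]

theorem nonAtomSize_le_subst (σ : A → DA A) (x : DA A) :
    x.nonAtomSize ≤ (subst σ x).nonAtomSize := by
  induction x using induction_mem with
  | atom b a => simp [nonAtomSize]
  | star b => simp [subst]
  | pair b x y hx hy => simp only [subst, nonAtomSize]; omega
  | mset b l ih => simpa [nonAtomSize, Function.comp_def] using List.sum_le_sum ih

theorem nonAtomSize_lt_subst {σ : A → DA A} {γ : A} (hγ : ∀ b a, σ γ ≠ .atom b a)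
    {x : DA A} (hx : Occurs γ x) : x.nonAtomSize < (subst σ x).nonAtomSize := by
  induction hx with
  | atom b => cases b <;> simpa [subst, nonAtomSize] using nonAtomSize_pos hγ
  | @pairL b x y _ ih =>
    have := nonAtomSize_le_subst σ y
    simp only [subst, nonAtomSize]; omega
  | @pairR b x y _ ih =>
    have := nonAtomSize_le_subst σ x
    simp only [subst, nonAtomSize]; omega
  | mset hmem _ ih =>
    simpa [nonAtomSize, Function.comp_def] using
      List.sum_lt_sum _ _ (fun x _ => nonAtomSize_le_subst σ x) ⟨_, hmem, ih⟩

theorem exists_nonAtomSize_lt_of_not_atomic {P : Type} [Fintype P] {D : Set (P → DA A)}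
    {y : P → DA A} (hy : ¬Atomic D y) :
    ∃ z ∈ D, ∑ p, (z p).nonAtomSize < ∑ p, (y p).nonAtomSize ∧
      ∃ σ : A → DA A, (fun p => subst σ (z p)) = y := by
  simp only [Atomic, not_forall, not_exists] at hy
  obtain ⟨σ, z, hz, rfl, γ, ⟨p, hγp⟩, hγ⟩ := hy
  refine ⟨z, hz, ?_, σ, rfl⟩
  exact Finset.sum_lt_sum (fun p _ => nonAtomSize_le_subst σ (z p))
    ⟨p, Finset.mem_univ p, nonAtomSize_lt_subst (fun b a h => hγ b a h) hγp⟩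

end DA

/-- Atomic points are enough: for `P` finite and any `D ⊆ (D_A)^P`, every
`y ∈ D` is a substitution instance of a `D`-atomic `x ∈ D`. -/
theorem DA.atomic_enough (A P : Type) [Fintype P] (D : Set (P → DA A))
    (y : P → DA A) (hy : y ∈ D) :
    ∃ x ∈ D, DA.Atomic D x ∧ ∃ σ : A → DA A, (fun p => DA.subst σ (x p)) = y := by
  induction hn : ∑ p, (y p).nonAtomSize using Nat.strong_induction_on generalizing y with
  | _ n ih =>
  by_cases hat : DA.Atomic D y
  · exact ⟨y, hy, hat, DA.atom true, funext fun p => DA.subst_atom_true (y p)⟩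
  obtain ⟨z, hz, hlt, σ, rfl⟩ := DA.exists_nonAtomSize_lt_of_not_atomic hat
  obtain ⟨x, hx, hxat, τ, rfl⟩ := ih _ (hn ▸ hlt) z hz rfl
  exact ⟨x, hx, hxat, fun a => DA.subst σ (τ a),
    funext fun p => (DA.subst_subst σ τ (x p)).symm⟩
end
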